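/- Let F ∈ ℤ[x₁,…,xₙ] and y' ∈ ℤ_pⁿ a critical point of F where F − F(y') vanishes to order exactly r. Write f(x) = F(x + y') − F(y') = ∑_{i≥r} f_i with f_i zero or homogeneous of degree i over ℤ_p. Then, for the local sum at level m = r+1, one has the identity S_{y'}(F,p,r+1) = ψ(F(y')/p^{r+1}) · p^{-2n} · ∑_{v ∈ 𝔽_pⁿ} ψ_p(\bar{f_r}(v)), where ψ is the standard additive character of ℚ_p trivial on ℤ_p, ψ_p the induced nontrivial character of 𝔽_p, and \bar{f_r} the reduction of f_r mod p. -/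

import Mathlib

open MvPolynomial

/-- The local normalized exponential sum
`S_y(F,p,m) = p^{-mn} ∑_{x ∈ (ℤ/p^mℤ)ⁿ, x ≡ y mod p} exp(2πi F(x)/p^m)`. -/
noncomputable def Sloc (n p m : ℕ) [NeZero p] (F : MvPolynomial (Fin n) ℤ) (y : Fin n → ℤ) : ℂ :=
  (p : ℂ) ^ (-(m * n : ℤ)) *
    ∑ x : Fin n → ZMod (p ^ m),
      if ∀ i, (((x i).val : ZMod p) = ((y i : ZMod p))) then
        Complex.exp (2 * Real.pi * Complex.I *
          (((MvPolynomial.eval (fun i => ((x i).val : ℤ)) F : ℤ) : ℂ) / (p : ℂ) ^ m))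
      else 0

/-!
Every point of the residue class `y' + p (ℤ/p^{r+1})ⁿ` is `y' + p s` for exactly one
`s ∈ (ℤ/p^r)ⁿ`. Expanding `F` at `y'` into the homogeneous parts `f_i` of `f` gives
`F(y' + p s) = F(y') + ∑_{i ≥ r} p^i f_i(s) ≡ F(y') + p^r f_r(s) (mod p^{r+1})`, so the summand
is `ψ(F(y')/p^{r+1}) ψ_p(f̄_r(s mod p))`. Each `v ∈ 𝔽_pⁿ` is hit by `p^{(r-1)n}` values of `s`,
and `p^{-(r+1)n} p^{(r-1)n} = p^{-2n}`.
-/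

open Finset

namespace MvPolynomial

theorem IsHomogeneous.aeval_smul {σ R S : Type*} [CommSemiring R] [CommSemiring S] [Algebra R S]
    {φ : MvPolynomial σ R} {m : ℕ} (hφ : φ.IsHomogeneous m) (c : S) (z : σ → S) :
    MvPolynomial.aeval (c • z) φ = c ^ m * MvPolynomial.aeval z φ := by
  conv_lhs => rw [φ.as_sum]
  conv_rhs => rw [φ.as_sum]
  simp only [map_sum, aeval_monomial, mul_sum]
  refine sum_congr rfl fun d hd => ?_
  have hdeg : ∑ i ∈ d.support, d i = m := by
    rw [← hφ (mem_support_iff.mp hd), Finsupp.weight_apply, Finsupp.sum]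
    simp
  simp only [Pi.smul_apply, smul_eq_mul, mul_pow, Finsupp.prod, prod_mul_distrib,
    prod_pow_eq_pow_sum, hdeg]
  ring

theorem aeval_smul_eq_pow_mul_homogeneousComponent {σ R S : Type*} [CommSemiring R]
    [CommSemiring S] [Algebra R S] {φ : MvPolynomial σ R} {r : ℕ}
    (hlow : ∀ i < r, homogeneousComponent i φ = 0) {c : S} (hc : c ^ (r + 1) = 0) (z : σ → S) :
    aeval (c • z) φ = c ^ r * aeval z (homogeneousComponent r φ) := by
  conv_lhs => rw [← sum_homogeneousComponent φ]
  rw [map_sum, sum_eq_single r]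
  · exact (homogeneousComponent_isHomogeneous r φ).aeval_smul c z
  · intro i _ hir
    rw [(homogeneousComponent_isHomogeneous i φ).aeval_smul]
    rcases hir.lt_or_gt with hi | hi
    · rw [hlow i hi, map_zero, mul_zero]
    · rw [pow_eq_zero_of_le hi hc, zero_mul]
  · intro hr
    rw [homogeneousComponent_eq_zero r φ (by simpa using hr), map_zero]

theorem aeval_bind₁_X_add_C_sub_C {σ R S : Type*} [CommRing R] [CommRing S] [Algebra R S]
    (F : MvPolynomial σ R) (y : σ → R) (z : σ → S) :
    aeval z (bind₁ (fun i => X i + C (y i)) F - C (eval y F)) =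
      aeval (fun i => algebraMap R S (y i) + z i) F - algebraMap R S (eval y F) := by
  simp [aeval_bind₁, add_comm]

end MvPolynomial

theorem AddMonoidHom.card_nsmul_sum_comp_of_surjective {G H M : Type*} [AddGroup G] [Fintype G]
    [AddGroup H] [Fintype H] [DecidableEq H] [AddCommMonoid M] (f : G →+ H)
    (hf : Function.Surjective f) (g : H → M) :
    Fintype.card H • ∑ a, g (f a) = Fintype.card G • ∑ b, g b := by
  set k := #{a | f a = 0}
  have hfiber (b : H) : #{a | f a = b} = k :=
    card_fiber_eq_of_mem_range f (hf b) ⟨0, map_zero f⟩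
  have hcard : Fintype.card G = Fintype.card H * k := by
    rw [← card_univ, card_eq_sum_card_fiberwise (f := f) (t := univ) (by simp)]
    simp [hfiber]
  have hsum : ∑ a, g (f a) = k • ∑ b, g b := by
    rw [← sum_fiberwise univ f, smul_sum]
    refine sum_congr rfl fun b _ => ?_
    rw [sum_congr rfl fun a ha => by rw [(mem_filter.mp ha).2], sum_const, hfiber]
  rw [hsum, hcard, smul_smul]

namespace ZMod

variable {p r : ℕ} [NeZero p]

theorem stdAddChar_pow_mul (w : ZMod (p ^ (r + 1))) :
    stdAddChar ((p : ZMod (p ^ (r + 1))) ^ r * w) = stdAddChar (w.cast : ZMod p) := by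
  obtain ⟨a, rfl⟩ := intCast_surjective w
  have hp : (p : ℂ) ≠ 0 := Nat.cast_ne_zero.mpr (NeZero.ne p)
  rw [cast_intCast (dvd_pow_self p r.succ_ne_zero), ← Int.cast_natCast, ← Int.cast_pow,
    ← Int.cast_mul, stdAddChar_coe, stdAddChar_coe]
  congr 1
  push_cast
  field_simp
  ring

theorem intCast_add_mul_val_injective (y : ℤ) :
    Function.Injective fun s : ZMod (p ^ r) => ((y + p * s.val : ℤ) : ZMod (p ^ (r + 1))) := by
  intro s t hst
  have h : (p : ℤ) * s.val ≡ p * t.val [ZMOD p * p ^ r] := by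
    have := (intCast_eq_intCast_iff _ _ _).mp hst
    rw [Nat.cast_pow, pow_succ'] at this
    exact Int.ModEq.add_left_cancel' y this
  have := (intCast_eq_intCast_iff _ _ _).mpr
    (Int.ModEq.mul_left_cancel' (Int.natCast_ne_zero.mpr (NeZero.ne p)) h)
  simpa using this

theorem exists_intCast_add_mul_val_eq_iff (y : ℤ) (a : ZMod (p ^ (r + 1))) :
    (∃ s : ZMod (p ^ r), ((y + p * s.val : ℤ) : ZMod (p ^ (r + 1))) = a) ↔
      (a.val : ZMod p) = y := by
  have hdvd : p ∣ p ^ (r + 1) := dvd_pow_self p r.succ_ne_zero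
  constructor
  · rintro ⟨s, rfl⟩
    rw [← cast_eq_val, cast_intCast hdvd]
    simp
  · intro h
    obtain ⟨t, ht⟩ : (p : ℤ) ∣ a.val - y := by
      rw [← intCast_zmod_eq_zero_iff_dvd]
      push_cast
      rw [h, sub_self]
    refine ⟨t, ?_⟩
    rw [← natCast_zmod_val a, ← Int.cast_natCast a.val, intCast_eq_intCast_iff,
      show (a.val : ℤ) = y + p * t by omega, Nat.cast_pow, pow_succ']
    refine Int.ModEq.add_left _ (Int.ModEq.mul_left' ?_)
    rw [← Nat.cast_pow, ← intCast_eq_intCast_iff]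
    simp

variable {σ M : Type*} [Fintype σ] [DecidableEq σ] [AddCommMonoid M]

theorem sum_filter_val_eq_sum_intCast_add_mul_val (y : σ → ℤ)
    [DecidablePred fun x : σ → ZMod (p ^ (r + 1)) => ∀ i, ((x i).val : ZMod p) = y i]
    (g : (σ → ZMod (p ^ (r + 1))) → M) :
    ∑ x with ∀ i, ((x i).val : ZMod p) = y i, g x =
      ∑ s : σ → ZMod (p ^ r), g fun i => ((y i + p * (s i).val : ℤ) : ZMod (p ^ (r + 1))) := by
  rw [← sum_image fun s _ t _ hst => funext fun i =>
    intCast_add_mul_val_injective (y i) (congrFun hst i)]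
  congr 1
  ext x
  simp only [mem_filter, mem_univ, true_and, mem_image, funext_iff,
    ← exists_intCast_add_mul_val_eq_iff, Classical.skolem]

theorem pow_card_nsmul_sum_comp_cast (hr : r ≠ 0) (g : (σ → ZMod p) → M) :
    p ^ Fintype.card σ • ∑ s : σ → ZMod (p ^ r), g (fun i => (s i).cast) =
      p ^ (r * Fintype.card σ) • ∑ v, g v := by
  have hdvd : p ∣ p ^ r := dvd_pow_self p hr
  have h := AddMonoidHom.card_nsmul_sum_comp_of_surjective
    ((castHom hdvd (ZMod p)).toAddMonoidHom.compLeft σ) (castHom_surjective hdvd).comp_left g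
  simp only [Fintype.card_fun, card] at h
  rw [pow_mul]
  exact h

end ZMod

theorem stdAddChar_aeval_intCast_add_mul_val {σ : Type*} {p r : ℕ} [NeZero p]
    {F f : MvPolynomial σ ℤ} {y : σ → ℤ}
    (hf : f = bind₁ (fun i => X i + C (y i)) F - C (eval y F))
    (hlow : ∀ i < r, homogeneousComponent i f = 0) (s : σ → ZMod (p ^ r)) :
    ZMod.stdAddChar (aeval (fun i => ((y i + p * (s i).val : ℤ) : ZMod (p ^ (r + 1)))) F) =
      ZMod.stdAddChar ((eval y F : ℤ) : ZMod (p ^ (r + 1))) *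
        ZMod.stdAddChar (aeval (fun i => ((s i).cast : ZMod p)) (homogeneousComponent r f)) := by
  set t : σ → ZMod (p ^ (r + 1)) := fun i => ((s i).val : ZMod (p ^ (r + 1)))
  have hp : (p : ZMod (p ^ (r + 1))) ^ (r + 1) = 0 := by exact_mod_cast ZMod.natCast_self _
  have hshift : aeval (fun i => ((y i + p * (s i).val : ℤ) : ZMod (p ^ (r + 1)))) F =
      ((eval y F : ℤ) : ZMod (p ^ (r + 1))) +
        (p : ZMod (p ^ (r + 1))) ^ r * aeval t (homogeneousComponent r f) := by
    rw [← aeval_smul_eq_pow_mul_homogeneousComponent hlow hp, hf, aeval_bind₁_X_add_C_sub_C,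
      algebraMap_int_eq]
    simp only [eq_intCast, add_sub_cancel]
    congr 2 with i
    push_cast [t]
    rfl
  have hcast : ((aeval t (homogeneousComponent r f)).cast : ZMod p) =
      aeval (fun i => ((s i).cast : ZMod p)) (homogeneousComponent r f) := by
    have hdvd : p ∣ p ^ (r + 1) := dvd_pow_self p r.succ_ne_zero
    rw [← ZMod.castHom_apply (h := hdvd), ← RingHom.toIntAlgHom_coe, comp_aeval_apply]
    congr 2 with i
    rw [RingHom.toIntAlgHom_coe, ZMod.castHom_apply, ZMod.cast_natCast hdvd, ZMod.natCast_val]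
  rw [hshift, AddChar.map_add_eq_mul, ZMod.stdAddChar_pow_mul, hcast]

theorem Sloc_eq_sum_stdAddChar (n p m : ℕ) [NeZero p] (F : MvPolynomial (Fin n) ℤ)
    (y : Fin n → ℤ) :
    Sloc n p m F y = (p : ℂ) ^ (-(m * n : ℤ)) *
      ∑ x : Fin n → ZMod (p ^ m) with ∀ i, ((x i).val : ZMod p) = y i,
        ZMod.stdAddChar (aeval x F) := by
  rw [Sloc, sum_filter]
  congr 1
  refine sum_congr rfl fun x _ => ?_
  split_ifs
  · have hcast : aeval x F = ((eval (fun i => ((x i).val : ℤ)) F : ℤ) : ZMod (p ^ m)) := by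
      have hx : (Int.castRingHom (ZMod (p ^ m)) ∘ fun i => ((x i).val : ℤ)) = x := by
        funext i
        simp
      rw [← eq_intCast (Int.castRingHom _), map_eval, hx, eval_map, aeval_def, algebraMap_int_eq]
    rw [hcast, ZMod.stdAddChar_coe]
    push_cast
    ring_nf
  · rfl

theorem Sloc_succ_eq {n p r : ℕ} [NeZero p] (hr : r ≠ 0) {F f : MvPolynomial (Fin n) ℤ}
    {y : Fin n → ℤ} (hf : f = bind₁ (fun i => X i + C (y i)) F - C (eval y F))
    (hlow : ∀ i < r, homogeneousComponent i f = 0) :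
    Sloc n p (r + 1) F y =
      ZMod.stdAddChar ((eval y F : ℤ) : ZMod (p ^ (r + 1))) * (p : ℂ) ^ (-(2 * n : ℤ)) *
        ∑ v : Fin n → ZMod p, ZMod.stdAddChar (aeval v (homogeneousComponent r f)) := by
  have hp : (p : ℂ) ≠ 0 := Nat.cast_ne_zero.mpr (NeZero.ne p)
  have hcount := ZMod.pow_card_nsmul_sum_comp_cast (p := p) (σ := Fin n) hr
    fun v => ZMod.stdAddChar (aeval v (homogeneousComponent r f))
  simp only [Fintype.card_fin, nsmul_eq_mul, Nat.cast_pow] at hcount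
  have hpow : (p : ℂ) ^ (-((r + 1 : ℕ) * n : ℤ)) * ((p : ℂ) ^ (r * n) / (p : ℂ) ^ n) =
      (p : ℂ) ^ (-(2 * n : ℤ)) := by
    rw [← zpow_natCast, ← zpow_natCast, ← zpow_sub₀ hp, ← zpow_add₀ hp]
    push_cast
    ring_nf
  rw [Sloc_eq_sum_stdAddChar, ZMod.sum_filter_val_eq_sum_intCast_add_mul_val]
  simp_rw [stdAddChar_aeval_intCast_add_mul_val hf hlow, ← mul_sum,
    eq_div_of_mul_eq (pow_ne_zero n hp) ((mul_comm _ _).trans hcount), ← hpow]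
  ring

theorem stmt18_general (n p r : ℕ) [NeZero p] (hr : 2 ≤ r)
    (F : MvPolynomial (Fin n) ℤ) (y' : Fin n → ℤ)
    (f : MvPolynomial (Fin n) ℤ)
    (hf : f = MvPolynomial.bind₁
        (fun i => MvPolynomial.X i + MvPolynomial.C (y' i)) F -
      MvPolynomial.C (MvPolynomial.eval y' F))
    (hlow : ∀ i < r, MvPolynomial.homogeneousComponent i f = 0) :
    Sloc n p (r + 1) F y' =
      Complex.exp (2 * Real.pi * Complex.I *
          (((MvPolynomial.eval y' F : ℤ) : ℂ) / (p : ℂ) ^ (r + 1))) *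
        (p : ℂ) ^ (-(2 * n : ℤ)) *
        ∑ v : Fin n → ZMod p,
          Complex.exp (2 * Real.pi * Complex.I *
            (((MvPolynomial.eval v
                ((MvPolynomial.homogeneousComponent r f).map
                  (Int.castRingHom (ZMod p)))).val : ℂ) / (p : ℂ))) := by
  have hcharN : Complex.exp (2 * Real.pi * Complex.I *
      (((eval y' F : ℤ) : ℂ) / (p : ℂ) ^ (r + 1))) =
      ZMod.stdAddChar ((eval y' F : ℤ) : ZMod (p ^ (r + 1))) := by
    rw [ZMod.stdAddChar_coe, mul_div_assoc, Nat.cast_pow]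
  have hcharP (v : Fin n → ZMod p) : Complex.exp (2 * Real.pi * Complex.I *
      (((eval v ((homogeneousComponent r f).map (Int.castRingHom (ZMod p)))).val : ℂ) / p)) =
      ZMod.stdAddChar (aeval v (homogeneousComponent r f)) := by
    rw [ZMod.stdAddChar_apply, ZMod.toCircle_apply, eval_map, ← algebraMap_int_eq, ← aeval_def,
      mul_div_assoc]
  simp_rw [Sloc_succ_eq (by omega) hf hlow, hcharN, hcharP]

/-- Let `y'` be a critical point of `F` at which `F − F(y')` vanishes to order exactly
`r`, and write `f(x) = F(x+y') − F(y') = ∑_{i≥r} f_i` with `f_i` homogeneous of degree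
`i`. Then the local sum at level `m = r+1` satisfies
`S_{y'}(F,p,r+1) = ψ(F(y')/p^{r+1}) · p^{-2n} · ∑_{v ∈ 𝔽_pⁿ} ψ_p(f̄_r(v))`,
where `ψ_p` is the standard nontrivial additive character of `𝔽_p` and `f̄_r` is the
reduction of `f_r` mod `p`. -/
theorem stmt18 (n p r : ℕ) [NeZero p] (hp : p.Prime) (hr : 2 ≤ r)
    (F : MvPolynomial (Fin n) ℤ) (y' : Fin n → ℤ)
    (hcrit : ∀ i, MvPolynomial.eval y' (MvPolynomial.pderiv i F) = 0)
    (f : MvPolynomial (Fin n) ℤ)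
    (hf : f = MvPolynomial.bind₁
        (fun i => MvPolynomial.X i + MvPolynomial.C (y' i)) F -
      MvPolynomial.C (MvPolynomial.eval y' F))
    (hlow : ∀ i < r, MvPolynomial.homogeneousComponent i f = 0)
    (hfr : MvPolynomial.homogeneousComponent r f ≠ 0) :
    Sloc n p (r + 1) F y' =
      Complex.exp (2 * Real.pi * Complex.I *
          (((MvPolynomial.eval y' F : ℤ) : ℂ) / (p : ℂ) ^ (r + 1))) *
        (p : ℂ) ^ (-(2 * n : ℤ)) *
        ∑ v : Fin n → ZMod p,
          Complex.exp (2 * Real.pi * Complex.I *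
            (((MvPolynomial.eval v
                ((MvPolynomial.homogeneousComponent r f).map
                  (Int.castRingHom (ZMod p)))).val : ℂ) / (p : ℂ))) :=
  stmt18_general n p r hr F y' f hf hlow
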